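/- For σ > 0 and c ∈ ℝ, ∫_{0}^{∞} Δ Φ((c−Δ)/σ) dΔ = (1/2)[(σ² + c²) Φ(c/σ) + σc e^{−c²/(2σ²)}/√(2π)]. -/

import Mathlib

/-!
With `u = (c - Δ) / σ`, the function `G Δ = ((Δ² - σ² - c²) Φ(u) - σ (c + Δ) φ(u)) / 2` is an
antiderivative of `Δ Φ(u)`: since `φ'(u) = -u φ(u)` and `(c + Δ) u = (c² - Δ²) / σ`, all the
`φ`-terms of `G'` cancel. Both `Φ` and `φ` are bounded by `eᵘ` as `u → -∞`, so `G` vanishes at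
`+∞` and the integral is `-G 0`.
-/

open Real MeasureTheory Set Filter Topology

/-- The standard normal cumulative distribution function. -/
noncomputable def Phi (x : ℝ) : ℝ :=
  ∫ t in Set.Iic x, Real.exp (-t^2 / 2) / Real.sqrt (2 * π)

noncomputable def phi (x : ℝ) : ℝ := Real.exp (-x^2 / 2) / Real.sqrt (2 * π)

lemma Phi_eq_integral_phi (x : ℝ) : Phi x = ∫ t in Iic x, phi t := rfl

lemma phi_nonneg (x : ℝ) : 0 ≤ phi x := by unfold phi; positivity

lemma continuous_phi : Continuous phi := by unfold phi; fun_prop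

lemma integrable_phi : Integrable phi := by
  convert (integrable_exp_neg_mul_sq (b := 1 / 2) (by norm_num)).div_const (Real.sqrt (2 * π))
    using 3
  simp only [phi]
  ring_nf

lemma hasDerivAt_phi (x : ℝ) : HasDerivAt phi (-x * phi x) x := by
  have h : HasDerivAt (fun x : ℝ => -x^2 / 2) (-x) x :=
    ((hasDerivAt_pow 2 x).fun_neg.div_const 2).congr_deriv (by push_cast; ring)
  exact (h.exp.div_const (Real.sqrt (2 * π))).congr_deriv (by rw [phi]; ring)

lemma hasDerivAt_Phi (x : ℝ) : HasDerivAt Phi (phi x) x := by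
  have hPhi : Phi = fun y => Phi 0 + ∫ t in (0:ℝ)..y, phi t := by
    ext y
    rw [← intervalIntegral.integral_Iic_sub_Iic integrable_phi.integrableOn
      integrable_phi.integrableOn, Phi_eq_integral_phi, Phi_eq_integral_phi]
    ring
  rw [hPhi]
  exact (intervalIntegral.integral_hasDerivAt_right integrable_phi.intervalIntegrable
    (continuous_phi.stronglyMeasurableAtFilter _ _) continuous_phi.continuousAt).const_add _

lemma Phi_nonneg (x : ℝ) : 0 ≤ Phi x :=
  setIntegral_nonneg measurableSet_Iic fun t _ => phi_nonneg t

lemma phi_le_exp {u : ℝ} (hu : u ≤ -2) : phi u ≤ exp u := by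
  have h2π : 1 ≤ Real.sqrt (2 * π) := Real.one_le_sqrt.2 (by nlinarith [pi_gt_three])
  calc phi u ≤ exp (-u^2 / 2) := div_le_self (exp_nonneg _) h2π
    _ ≤ exp u := exp_le_exp.2 (by nlinarith)

lemma Phi_le_exp {u : ℝ} (hu : u ≤ -2) : Phi u ≤ exp u := by
  calc Phi u ≤ ∫ t in Iic u, exp t :=
        setIntegral_mono_on integrable_phi.integrableOn (integrableOn_exp_Iic u)
          measurableSet_Iic fun t ht => phi_le_exp (le_trans ht hu)
    _ = exp u := integral_exp_Iic u

lemma tendsto_pow_mul_exp_div_atTop {σ : ℝ} (hσ : 0 < σ) (c : ℝ) (n : ℕ) :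
    Tendsto (fun Δ => Δ^n * exp ((c - Δ) / σ)) atTop (𝓝 0) := by
  have h := ((tendsto_pow_mul_exp_neg_atTop_nhds_zero n).comp
    (tendsto_id.atTop_div_const hσ)).const_mul (σ^n * exp (c / σ))
  rw [mul_zero] at h
  refine h.congr fun Δ => ?_
  rw [Function.comp_apply, id, sub_div, sub_eq_add_neg, exp_add, div_pow]
  field_simp

lemma tendsto_pow_mul_comp_div_atTop {g : ℝ → ℝ} (hg0 : ∀ u, 0 ≤ g u)
    (hg : ∀ᶠ u in atBot, g u ≤ exp u) {σ : ℝ} (hσ : 0 < σ) (c : ℝ) (n : ℕ) :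
    Tendsto (fun Δ => Δ^n * g ((c - Δ) / σ)) atTop (𝓝 0) := by
  have hu : Tendsto (fun Δ => (c - Δ) / σ) atTop atBot :=
    (tendsto_atBot_add_const_left _ c tendsto_neg_atTop_atBot).atBot_div_const hσ
  refine squeeze_zero' ?_ ?_ (tendsto_pow_mul_exp_div_atTop hσ c n)
  · filter_upwards [eventually_ge_atTop 0] with Δ hΔ using mul_nonneg (by positivity) (hg0 _)
  · filter_upwards [eventually_ge_atTop 0, hu.eventually hg] with Δ hΔ hgΔ
    exact mul_le_mul_of_nonneg_left hgΔ (by positivity)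

noncomputable def mulPhiAntideriv (σ c Δ : ℝ) : ℝ :=
  ((Δ^2 - σ^2 - c^2) * Phi ((c - Δ) / σ) - σ * (c + Δ) * phi ((c - Δ) / σ)) / 2

lemma hasDerivAt_mulPhiAntideriv {σ : ℝ} (hσ : σ ≠ 0) (c Δ : ℝ) :
    HasDerivAt (mulPhiAntideriv σ c) (Δ * Phi ((c - Δ) / σ)) Δ := by
  have hu : HasDerivAt (fun Δ => (c - Δ) / σ) (-1 / σ) Δ := by
    simpa using ((hasDerivAt_id Δ).const_sub c).div_const σ
  have hΦ := (hasDerivAt_Phi _).comp Δ hu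
  have hφ := (hasDerivAt_phi _).comp Δ hu
  have hpoly := ((hasDerivAt_pow 2 Δ).sub_const (σ^2)).sub_const (c^2)
  have hlin := ((hasDerivAt_id Δ).const_add c).const_mul σ
  refine (((hpoly.mul hΦ).sub (hlin.mul hφ)).div_const 2).congr_deriv ?_
  simp only [Function.comp_apply, id]
  field_simp
  ring

lemma tendsto_mulPhiAntideriv_atTop {σ : ℝ} (hσ : 0 < σ) (c : ℝ) :
    Tendsto (mulPhiAntideriv σ c) atTop (𝓝 0) := by
  have hΦ n := tendsto_pow_mul_comp_div_atTop Phi_nonneg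
    ((eventually_le_atBot (-2)).mono fun _ => Phi_le_exp) hσ c n
  have hφ n := tendsto_pow_mul_comp_div_atTop phi_nonneg
    ((eventually_le_atBot (-2)).mono fun _ => phi_le_exp) hσ c n
  have h := ((((hΦ 2).sub ((hΦ 0).const_mul (σ^2 + c^2))).sub
    ((hφ 0).const_mul (σ * c))).sub ((hφ 1).const_mul σ)).div_const 2
  simp only [mul_zero, sub_zero, zero_div] at h
  refine h.congr fun Δ => ?_
  simp only [mulPhiAntideriv]
  ring

theorem integral_mul_Phi (σ c : ℝ) (hσ : 0 < σ) :
    (∫ Δ in Set.Ici (0:ℝ), Δ * Phi ((c - Δ) / σ))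
      = (1/2) * ((σ^2 + c^2) * Phi (c / σ)
          + σ * c * Real.exp (-c^2 / (2 * σ^2)) / Real.sqrt (2 * π)) := by
  rw [integral_Ici_eq_integral_Ioi, integral_Ioi_of_hasDerivAt_of_nonneg'
    (fun Δ _ => hasDerivAt_mulPhiAntideriv hσ.ne' c Δ)
    (fun Δ hΔ => mul_nonneg (le_of_lt hΔ) (Phi_nonneg _)) (tendsto_mulPhiAntideriv_atTop hσ c)]
  have hphi : phi (c / σ) = exp (-c^2 / (2 * σ^2)) / Real.sqrt (2 * π) := by
    rw [phi, div_pow]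
    field_simp
  simp only [mulPhiAntideriv, sub_zero, add_zero, hphi]
  ring
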